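/- arXiv:1312.5038 — 7 statements merged into one kernel-verified Lean document; each statement's English description precedes it below -/
import Mathlib

section
/- For every real p with 0 < p < 1, there exists a unique real number α > 0 satisfying the equation (1−p)·(α^{1/(1−p)} + 1) = α + 1. -/
/-!
With `q = 1 / (1 - p) > 1` the equation reads `α ^ q - q * α = q - 1`. The left-hand side is a
convex continuous function of `α ≥ 0` that vanishes at `0 < q - 1` and is eventually larger than
`q - 1`, so the intermediate value theorem gives a positive root. Two positive roots `a < b` are
impossible: `a` lies strictly between `0` and `b`, so convexity bounds the value at `a` strictly
below `q - 1`.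
-/

open Set

theorem ConvexOn.existsUnique_pos_eq {f : ℝ → ℝ} {c M : ℝ} (hf : ConvexOn ℝ (Ici 0) f)
    (hcont : ContinuousOn f (Icc 0 M)) (hM0 : 0 ≤ M) (h0 : f 0 < c) (hM : c ≤ f M) :
    ∃! x, 0 < x ∧ f x = c := by
  obtain ⟨x, hx, hfx⟩ := intermediate_value_Icc hM0 hcont ⟨h0.le, hM⟩
  have hxpos : 0 < x := lt_of_le_of_ne hx.1 (by rintro rfl; exact h0.ne hfx)
  refine ⟨x, ⟨hxpos, hfx⟩, ?_⟩
  have no_larger_root : ∀ a b, 0 < a → a < b → f a = c → f b ≠ c := by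
    intro a b ha hab hfa hfb
    have hseg : a ∈ openSegment ℝ 0 b := by
      rw [openSegment_eq_Ioo (ha.trans hab)]
      exact ⟨ha, hab⟩
    have hfab := hf.lt_right_of_left_lt self_mem_Ici (ha.trans hab).le hseg (hfa ▸ h0)
    exact hfab.ne (hfa.trans hfb.symm)
  rintro y ⟨hy, hfy⟩
  rcases lt_trichotomy y x with hyx | rfl | hxy
  · exact absurd hfx (no_larger_root y x hy hyx hfy)
  · rfl
  · exact absurd hfy (no_larger_root x y hxpos hxy hfx)

theorem convexOn_rpow_sub_mul {q : ℝ} (hq : 1 ≤ q) :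
    ConvexOn ℝ (Ici 0) fun x : ℝ => x ^ q - q * x :=
  (convexOn_rpow hq).sub ((concaveOn_id (convex_Ici 0)).smul (by linarith))

theorem exists_le_rpow_sub_mul {q : ℝ} (hq : 1 < q) : ∃ M : ℝ, 0 ≤ M ∧ q - 1 ≤ M ^ q - q * M := by
  set M := (2 * q) ^ (q - 1)⁻¹
  have hM1 : 1 ≤ M := Real.one_le_rpow (by linarith) (by simp only [inv_nonneg]; linarith)
  have hMq : M ^ q = 2 * q * M := by
    rw [show q = (q - 1) + 1 by ring, Real.rpow_add_one (by positivity),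
      Real.rpow_inv_rpow (by linarith) (by linarith)]
    ring
  refine ⟨M, by linarith, ?_⟩
  rw [hMq]
  nlinarith

/-- For every real `p` with `0 < p < 1`, there exists a unique real `α > 0` satisfying
`(1−p)·(α^(1/(1−p)) + 1) = α + 1`. -/
theorem unique_alpha (p : ℝ) (hp : 0 < p) (hp1 : p < 1) :
    ∃! α : ℝ, 0 < α ∧ (1 - p) * (α ^ (1 / (1 - p)) + 1) = α + 1 := by
  have h1p : 0 < 1 - p := by linarith
  set q := 1 / (1 - p) with hq_def
  have hq : 1 < q := by rw [lt_div_iff₀ h1p]; linarith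
  have equation_iff (α : ℝ) : (1 - p) * (α ^ q + 1) = α + 1 ↔ α ^ q - q * α = q - 1 := by
    rw [hq_def]
    field_simp
    constructor <;> intro h <;> linarith
  obtain ⟨M, hM0, hM⟩ := exists_le_rpow_sub_mul hq
  simpa only [equation_iff] using (convexOn_rpow_sub_mul hq.le).existsUnique_pos_eq
    (Real.continuous_rpow_const (by linarith) |>.sub (continuous_const.mul continuous_id)).continuousOn
    hM0 (by simp only [Real.zero_rpow (by linarith : q ≠ 0)]; linarith) hM
end

section
/- Let 0 < p < 1 satisfy 1/p − 1 ≥ (1/p − 1)^{1−p} + 1, and set α = ((1−p)/p)^{1−p} and C = (1−p)/p. Then for all real z < 0 and all real x ≥ z, one has α^{−1}·(−z)^{p−1}·(p·x − (p−1)·z) ≥ |x|^p − C^p·(−z)^p. -/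
/-!
Put `w = -z`, `C = (1 - p) / p` and `a = C w`. Since `p C = 1 - p`, the left side is
`p a^(p-1) (x - a)` and the subtracted term is `a^p`. For `x ≥ 0` the inequality is then the
tangent-line bound for the concave function `t ↦ t^p` at `a`. For `-w ≤ x < 0` the left side is at
least its value `-C^(p-1) w^p` at `x = -w`, while the right side is at most `(1 - C^p) w^p`; the
hypothesis on `p`, multiplied by `C^(p-1)`, reads `1 + C^(p-1) ≤ C^p`, which is exactly the
comparison needed.
-/

open Real

theorem rpow_le_rpow_add_mul_rpow_sub_one_mul_sub {p a x : ℝ} (hp₀ : 0 ≤ p) (hp₁ : p ≤ 1)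
    (ha : 0 < a) (hx : 0 ≤ x) : x ^ p ≤ a ^ p + p * a ^ (p - 1) * (x - a) := by
  have amgm : x ^ p * a ^ (1 - p) ≤ p * x + (1 - p) * a :=
    geom_mean_le_arith_mean2_weighted hp₀ (by linarith) hx ha.le (by ring)
  have cancel : a ^ (1 - p) * a ^ (p - 1) = 1 := by
    rw [← rpow_add ha]; norm_num
  have hpow : a ^ (p - 1) * a = a ^ p := by
    rw [← rpow_add_one ha.ne']; norm_num
  calc x ^ p = x ^ p * a ^ (1 - p) * a ^ (p - 1) := by rw [mul_assoc, cancel, mul_one]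
    _ ≤ (p * x + (1 - p) * a) * a ^ (p - 1) :=
        mul_le_mul_of_nonneg_right amgm (rpow_nonneg ha.le _)
    _ = a ^ p + p * a ^ (p - 1) * (x - a) := by rw [← hpow]; ring

theorem one_add_rpow_sub_one_le_rpow {C p : ℝ} (hC : 0 < C) (h : C ^ (1 - p) + 1 ≤ C) :
    1 + C ^ (p - 1) ≤ C ^ p := by
  have cancel : C ^ (1 - p) * C ^ (p - 1) = 1 := by
    rw [← rpow_add hC]; norm_num
  have hpow : C * C ^ (p - 1) = C ^ p := by
    rw [mul_comm, ← rpow_add_one hC.ne']; norm_num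
  calc 1 + C ^ (p - 1) = (C ^ (1 - p) + 1) * C ^ (p - 1) := by rw [add_mul, cancel, one_mul]
    _ ≤ C * C ^ (p - 1) := mul_le_mul_of_nonneg_right h (rpow_nonneg hC.le _)
    _ = C ^ p := hpow

theorem abs_rpow_sub_le_of_nonpos {p C w x : ℝ} (hp₀ : 0 ≤ p) (hC : 0 < C) (hw : 0 < w)
    (hpC : p * C = 1 - p) (hCp : 1 + C ^ (p - 1) ≤ C ^ p) (hx : x ≤ 0) (hwx : -w ≤ x) :
    |x| ^ p - (C * w) ^ p ≤ (C * w) ^ (p - 1) * (p * (x - C * w)) := by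
  have hpow : w ^ (p - 1) * w = w ^ p := by
    rw [← rpow_add_one hw.ne']; norm_num
  have habs : |x| ^ p ≤ w ^ p :=
    rpow_le_rpow (abs_nonneg x) (by rw [abs_of_nonpos hx]; linarith) hp₀
  calc |x| ^ p - (C * w) ^ p ≤ (1 - C ^ p) * w ^ p := by
        rw [mul_rpow hC.le hw.le]; linarith
    _ ≤ -C ^ (p - 1) * w ^ p := by
        nlinarith [mul_le_mul_of_nonneg_right hCp (rpow_nonneg hw.le p)]
    -- `p * C = 1 - p` makes `p * C ^ (p - 1) * (1 + C) = C ^ (p - 1)`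
    _ = (C * w) ^ (p - 1) * (p * (-w - C * w)) := by
        rw [mul_rpow hC.le hw.le, ← hpow]
        linear_combination (C ^ (p - 1) * w ^ (p - 1) * w) * hpC
    _ ≤ (C * w) ^ (p - 1) * (p * (x - C * w)) := by gcongr

/-- Majorization property of `U(x,z) = α⁻¹(−z)^(p−1)[px − (p−1)z]` in the range `p ≤ p₀`:
if `0 < p < 1` with `1/p − 1 ≥ (1/p − 1)^(1−p) + 1`, `α = ((1−p)/p)^(1−p)`, `C = (1−p)/p`,
then for all `z < 0` and `x ≥ z`, `U(x,z) ≥ |x|^p − C^p(−z)^p`. -/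
theorem majorization_small_p (p : ℝ) (hp : 0 < p) (hp1 : p < 1)
    (hrange : 1 / p - 1 ≥ (1 / p - 1) ^ (1 - p) + 1)
    (z x : ℝ) (hz : z < 0) (hxz : z ≤ x) :
    (((1 - p) / p) ^ (1 - p))⁻¹ * (-z) ^ (p - 1) * (p * x - (p - 1) * z)
      ≥ |x| ^ p - ((1 - p) / p) ^ p * (-z) ^ p := by
  set C := (1 - p) / p with hCdef
  have hC : 0 < C := div_pos (by linarith) hp
  have hpC : p * C = 1 - p := by rw [hCdef]; field_simp
  have hw : 0 < -z := neg_pos.mpr hz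
  have hcoef : (C ^ (1 - p))⁻¹ * (-z) ^ (p - 1) = (C * -z) ^ (p - 1) := by
    rw [← rpow_neg hC.le, neg_sub, mul_rpow hC.le hw.le]
  rw [hcoef, ← mul_rpow hC.le hw.le,
    show p * x - (p - 1) * z = p * (x - C * -z) by linear_combination (-z) * hpC]
  rcases le_or_gt 0 x with hx | hx
  · rw [abs_of_nonneg hx]
    linarith [rpow_le_rpow_add_mul_rpow_sub_one_mul_sub hp.le hp1.le (mul_pos hC hw) hx]
  · have hCp : 1 + C ^ (p - 1) ≤ C ^ p := by
      refine one_add_rpow_sub_one_le_rpow hC ?_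
      rwa [show 1 / p - 1 = C by rw [hCdef]; field_simp] at hrange
    exact abs_rpow_sub_le_of_nonpos hp.le hC hw hpC hCp hx.le (by linarith)
end

section
/- Let 0 < p < 1 satisfy 1/p − 1 < (1/p − 1)^{1−p} + 1, let α > 0 satisfy (1−p)·(α^{1/(1−p)} + 1) = α + 1, and set C = (1 + α^{−1})^{1/p}. Then for all real z < 0 and all real x ≥ z, one has α^{−1}·(−z)^{p−1}·(p·x − (p−1)·z) ≥ |x|^p − C^p·(−z)^p. -/
/-!
Write `s = -z > 0`. Since `C^p = 1 + α⁻¹` and `s^p = α⁻¹ s^(p-1) · α s`, the claim becomes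
`|x|^p ≤ α⁻¹ s^(p-1) (p x + (α + p) s)`. For `x ≤ 0` this follows from `|x| ≤ s`. For `x ≥ 0`
the right-hand side is the tangent line of the concave map `x ↦ x^p` at `t s`, where
`t = α^(1/(1-p))`: the defining equation of `α` says `(1 - p) t = α + p`, and `t^(p-1) = α⁻¹`.
-/

open Real

lemma rpow_le_rpow_sub_one_mul_tangent {p a b : ℝ} (hp0 : 0 ≤ p) (hp1 : p ≤ 1) (ha : 0 ≤ a)
    (hb : 0 < b) : a ^ p ≤ b ^ (p - 1) * (p * a + (1 - p) * b) := by
  have hamgm : a ^ p * b ^ (1 - p) ≤ p * a + (1 - p) * b :=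
    geom_mean_le_arith_mean2_weighted hp0 (sub_nonneg.2 hp1) ha hb.le (add_sub_cancel p 1)
  calc a ^ p = b ^ (p - 1) * (a ^ p * b ^ (1 - p)) := by
        rw [mul_left_comm, ← rpow_add hb, sub_add_sub_cancel', sub_self, rpow_zero, mul_one]
    _ ≤ b ^ (p - 1) * (p * a + (1 - p) * b) := by gcongr

lemma rpow_one_div_one_sub_rpow_sub_one {α p : ℝ} (hα : 0 < α) (hp : p ≠ 1) :
    (α ^ (1 / (1 - p))) ^ (p - 1) = α⁻¹ := by
  have hexp : 1 / (1 - p) * (p - 1) = -1 := by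
    field_simp [sub_ne_zero.2 hp.symm]
    ring
  rw [← rpow_mul hα.le, hexp, rpow_neg_one]

lemma abs_rpow_le_of_neg_le {p α s x : ℝ} (hp : 0 < p) (hp1 : p < 1) (hα : 0 < α)
    (hαeq : (1 - p) * (α ^ (1 / (1 - p)) + 1) = α + 1) (hs : 0 < s) (hx : -s ≤ x) :
    |x| ^ p ≤ α⁻¹ * s ^ (p - 1) * (p * x + (α + p) * s) := by
  have hsp : s ^ p = α⁻¹ * s ^ (p - 1) * (α * s) := by
    rw [rpow_sub_one hs.ne']
    field_simp
  rcases le_total x 0 with hx0 | hx0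
  · calc |x| ^ p ≤ s ^ p := rpow_le_rpow (abs_nonneg x) (by rw [abs_of_nonpos hx0]; linarith) hp.le
      _ = α⁻¹ * s ^ (p - 1) * (α * s) := hsp
      _ ≤ α⁻¹ * s ^ (p - 1) * (p * x + (α + p) * s) := by
        gcongr
        nlinarith
  · set t := α ^ (1 / (1 - p))
    have ht : 0 < t := rpow_pos_of_pos hα _
    have htα : (1 - p) * t = α + p := by linarith
    have htp : (t * s) ^ (p - 1) = α⁻¹ * s ^ (p - 1) := by
      rw [mul_rpow ht.le hs.le, rpow_one_div_one_sub_rpow_sub_one hα hp1.ne]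
    calc |x| ^ p = x ^ p := by rw [abs_of_nonneg hx0]
      _ ≤ (t * s) ^ (p - 1) * (p * x + (1 - p) * (t * s)) :=
        rpow_le_rpow_sub_one_mul_tangent hp.le hp1.le hx0 (mul_pos ht hs)
      _ = α⁻¹ * s ^ (p - 1) * (p * x + (α + p) * s) := by
        rw [htp, ← mul_assoc, htα]

theorem majorization_large_p_general (p : ℝ) (hp : 0 < p) (hp1 : p < 1)
    (α : ℝ) (hα : 0 < α) (hαeq : (1 - p) * (α ^ (1 / (1 - p)) + 1) = α + 1)
    (z x : ℝ) (hz : z < 0) (hxz : z ≤ x) :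
    α⁻¹ * (-z) ^ (p - 1) * (p * x - (p - 1) * z)
      ≥ |x| ^ p - ((1 + α⁻¹) ^ (1 / p)) ^ p * (-z) ^ p := by
  have hs : 0 < -z := neg_pos.2 hz
  have hC : ((1 + α⁻¹) ^ (1 / p)) ^ p = 1 + α⁻¹ := by
    rw [← rpow_mul (by positivity), one_div_mul_cancel hp.ne', rpow_one]
  have hbound := abs_rpow_le_of_neg_le (x := x) hp hp1 hα hαeq hs (by linarith)
  have hsplit : α⁻¹ * (-z) ^ (p - 1) * (p * x + (α + p) * -z)
      = α⁻¹ * (-z) ^ (p - 1) * (p * x - (p - 1) * z) + (1 + α⁻¹) * (-z) ^ p := by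
    rw [rpow_sub_one hs.ne']
    field_simp [hz.ne]
    ring
  rw [hC]
  linarith

/-- Majorization property of `U(x,z) = α⁻¹(−z)^(p−1)[px − (p−1)z]` in the range `p > p₀`:
if `0 < p < 1` with `1/p − 1 < (1/p − 1)^(1−p) + 1`, `α > 0` satisfies
`(1−p)(α^(1/(1−p)) + 1) = α + 1` and `C = (1 + α⁻¹)^(1/p)`, then for all `z < 0` and
`x ≥ z`, `U(x,z) ≥ |x|^p − C^p(−z)^p`. -/
theorem majorization_large_p (p : ℝ) (hp : 0 < p) (hp1 : p < 1)
    (hrange : 1 / p - 1 < (1 / p - 1) ^ (1 - p) + 1)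
    (α : ℝ) (hα : 0 < α) (hαeq : (1 - p) * (α ^ (1 / (1 - p)) + 1) = α + 1)
    (z x : ℝ) (hz : z < 0) (hxz : z ≤ x) :
    α⁻¹ * (-z) ^ (p - 1) * (p * x - (p - 1) * z)
      ≥ |x| ^ p - ((1 + α⁻¹) ^ (1 / p)) ^ p * (-z) ^ p :=
  majorization_large_p_general p hp hp1 α hα hαeq z x hz hxz
end

section
/- For every real p with 1/2 < p < 1, one has 1 + ∫_1^∞ s^{p−1}/(s+1) ds > (1/p − 1)^p + ∫_{1/p−1}^∞ s^{p−1}/(s+1) ds; that is, 𝔠_p > c_p in this range. -/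
/-!
Write `a = 1/p - 1`, so that `0 < a < 1` and `p (a + 1) = 1`. Splitting `∫_a^∞` at `1`, the claim
reduces to `∫_a^1 s^(p-1)/(s+1) ds < 1 - a^p = ∫_a^1 p s^(p-1) ds`, and this holds pointwise
because `p (s + 1) > p (a + 1) = 1` for `s > a`.
-/

open MeasureTheory Set

lemma integrableOn_rpow_sub_one_div_add_one_Ioi {p a : ℝ} (ha : 0 < a) (hp : p < 1) :
    IntegrableOn (fun s : ℝ => s ^ (p - 1) / (s + 1)) (Ioi a) := by
  have hdom : IntegrableOn (fun s : ℝ => s ^ (p - 2)) (Ioi a) :=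
    (integrableOn_Ioi_rpow_iff ha).2 (by linarith)
  refine hdom.mono' ?_ ?_
  · refine ContinuousOn.aestronglyMeasurable ?_ measurableSet_Ioi
    exact (continuousOn_id.rpow_const fun x hx => Or.inl (ha.trans hx).ne').div
      (continuousOn_id.add continuousOn_const) fun x hx => by linarith [mem_Ioi.1 hx]
  · filter_upwards [ae_restrict_mem measurableSet_Ioi] with x hx
    have hx0 : 0 < x := ha.trans hx
    rw [Real.norm_of_nonneg (by positivity), show p - 2 = (p - 1) - 1 by ring,
      Real.rpow_sub_one hx0.ne' (p - 1)]
    exact div_le_div_of_nonneg_left (by positivity) hx0 (by linarith)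

lemma one_div_sub_one_mem_Ioo {p : ℝ} (hp : 1 / 2 < p) (hp1 : p < 1) : 1 / p - 1 ∈ Ioo 0 1 := by
  have hp0 : 0 < p := by linarith
  constructor
  · rw [sub_pos, lt_div_iff₀ hp0]; linarith
  · rw [sub_lt_iff_lt_add, div_lt_iff₀ hp0]; linarith

lemma rpow_div_add_one_lt_mul_rpow {p q s : ℝ} (hs : 0 < s) (h : 1 < p * (s + 1)) :
    s ^ q / (s + 1) < p * s ^ q := by
  rw [div_lt_iff₀ (by linarith)]
  nlinarith [Real.rpow_pos_of_pos hs q]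

lemma integral_Ioc_rpow_sub_one_div_add_one_lt {p : ℝ} (hp : 1 / 2 < p) (hp1 : p < 1) :
    ∫ s in Ioc (1 / p - 1) 1, s ^ (p - 1) / (s + 1) < 1 - (1 / p - 1) ^ p := by
  set a := 1 / p - 1 with ha_def
  have hp0 : 0 < p := by linarith
  obtain ⟨ha0, ha1⟩ := one_div_sub_one_mem_Ioo hp hp1
  have hpa : p * (a + 1) = 1 := by rw [ha_def, sub_add_cancel, mul_one_div_cancel hp0.ne']
  have hcont : ContinuousOn (fun s : ℝ => s ^ (p - 1)) (Icc a 1) :=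
    continuousOn_id.rpow_const fun x hx => Or.inl (ha0.trans_le hx.1).ne'
  have hbound : ∀ s ∈ Ioc a 1, s ^ (p - 1) / (s + 1) < p * s ^ (p - 1) := fun s hs =>
    rpow_div_add_one_lt_mul_rpow (ha0.trans hs.1) (by nlinarith [hs.1])
  have hprimitive : ∫ s in a..1, p * s ^ (p - 1) = 1 - a ^ p := by
    rw [intervalIntegral.integral_const_mul,
      integral_rpow (Or.inl (by linarith : (-1 : ℝ) < p - 1)), sub_add_cancel, Real.one_rpow]
    field_simp
  rw [← intervalIntegral.integral_of_le ha1.le, ← hprimitive]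
  refine intervalIntegral.integral_lt_integral_of_continuousOn_of_le_of_exists_lt ha1
    (hcont.div (continuousOn_id.add continuousOn_const) fun x hx => by linarith [hx.1])
    (continuousOn_const.mul hcont) (fun s hs => (hbound s hs).le)
    ⟨1, right_mem_Icc.2 ha1.le, hbound 1 (right_mem_Ioc.2 ha1)⟩

/-- For every `1/2 < p < 1`, one has `𝔠_p > c_p`, i.e.
`1 + ∫_1^∞ s^(p−1)/(s+1) ds > (1/p − 1)^p + ∫_{1/p−1}^∞ s^(p−1)/(s+1) ds`. -/
theorem frak_cp_gt_cp (p : ℝ) (hp : 1 / 2 < p) (hp1 : p < 1) :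
    1 + (∫ s in Set.Ioi (1 : ℝ), s ^ (p - 1) / (s + 1))
      > (1 / p - 1) ^ p + ∫ s in Set.Ioi (1 / p - 1), s ^ (p - 1) / (s + 1) := by
  obtain ⟨ha0, ha1⟩ := one_div_sub_one_mem_Ioo hp hp1
  have hint := integrableOn_rpow_sub_one_div_add_one_Ioi ha0 hp1
  have hsplit : ∫ s in Ioi (1 / p - 1), s ^ (p - 1) / (s + 1)
      = (∫ s in Ioc (1 / p - 1) 1, s ^ (p - 1) / (s + 1))
        + ∫ s in Ioi (1 : ℝ), s ^ (p - 1) / (s + 1) := by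
    rw [← setIntegral_union (Ioc_disjoint_Ioi le_rfl) measurableSet_Ioi
      (hint.mono_set Ioc_subset_Ioi_self) (hint.mono_set (Ioi_subset_Ioi ha1.le)),
      Ioc_union_Ioi_eq_Ioi ha1.le]
  linarith [integral_Ioc_rpow_sub_one_div_add_one_lt hp hp1]
end

section
/- Let 0 < p < 1 and define, for real x, y ≥ 0 and z < 0: U(x,y,z) = y^p − c_p^p·(−z)^p + p·(x−z)·(−z)^{p−1}·∫_{−y/z}^∞ r^{p−1}/(r+1) dr if y > −(1/p − 1)·z, and U(x,y,z) = ((1/p − 1)^p − c_p^p)·(−z)^p + p·(x−z)·(−z)^{p−1}·∫_{1/p−1}^∞ r^{p−1}/(r+1) dr if y ≤ −(1/p − 1)·z. Then for all z < 0, y ≥ 0 and x ≥ z, one has U(x,y,z) ≥ y^p − c_p^p·(−z)^p. -/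
/-!
Since `x ≥ z`, the last term of `U` is a nonnegative weight times the integral of a nonnegative
function, so it can be dropped. In the first branch what remains is exactly `y^p − c_p^p (−z)^p`;
in the second, `0 ≤ y ≤ (1/p − 1)(−z)` gives `y^p ≤ (1/p − 1)^p (−z)^p`.
-/

open MeasureTheory

noncomputable def specialU (p : ℝ) (x y z : ℝ) : ℝ :=
  if y > -(1 / p - 1) * z then
    y ^ p - ((1 / p - 1) ^ p + ∫ s in Set.Ioi (1 / p - 1), s ^ (p - 1) / (s + 1)) * (-z) ^ p
      + p * (x - z) * (-z) ^ (p - 1) * ∫ r in Set.Ioi (-y / z), r ^ (p - 1) / (r + 1)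
  else
    ((1 / p - 1) ^ p
        - ((1 / p - 1) ^ p + ∫ s in Set.Ioi (1 / p - 1), s ^ (p - 1) / (s + 1))) * (-z) ^ p
      + p * (x - z) * (-z) ^ (p - 1) * ∫ r in Set.Ioi (1 / p - 1), r ^ (p - 1) / (r + 1)

lemma setIntegral_Ioi_rpow_div_add_one_nonneg {a : ℝ} (ha : 0 ≤ a) (s : ℝ) :
    0 ≤ ∫ r in Set.Ioi a, r ^ s / (r + 1) :=
  setIntegral_nonneg measurableSet_Ioi fun r hr =>
    have hr0 : 0 ≤ r := ha.trans (le_of_lt hr)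
    div_nonneg (Real.rpow_nonneg hr0 s) (by linarith)

lemma rpow_le_mul_rpow_of_le_mul {y a b p : ℝ} (hy : 0 ≤ y) (hb : 0 < b) (hp : 0 ≤ p)
    (hyab : y ≤ a * b) : y ^ p ≤ a ^ p * b ^ p := by
  have ha : 0 ≤ a := nonneg_of_mul_nonneg_left (hy.trans hyab) hb
  rw [← Real.mul_rpow ha hb.le]
  exact Real.rpow_le_rpow hy hyab hp

theorem specialU_majorization_general (p : ℝ) (hp : 0 < p)
    (z y x : ℝ) (hz : z < 0) (hy : 0 ≤ y) (hxz : z ≤ x) :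
    specialU p x y z
      ≥ y ^ p - ((1 / p - 1) ^ p + ∫ s in Set.Ioi (1 / p - 1), s ^ (p - 1) / (s + 1))
          * (-z) ^ p := by
  have hw : 0 < -z := neg_pos.2 hz
  have hweight : 0 ≤ p * (x - z) * (-z) ^ (p - 1) :=
    mul_nonneg (mul_nonneg hp.le (sub_nonneg.2 hxz)) (Real.rpow_nonneg hw.le _)
  unfold specialU
  split_ifs with h
  · have hlow : 0 ≤ -y / z := div_nonneg_of_nonpos (neg_nonpos.2 hy) hz.le
    linarith [mul_nonneg hweight (setIntegral_Ioi_rpow_div_add_one_nonneg hlow (p - 1))]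
  · have hyq : y ≤ (1 / p - 1) * -z := by linarith
    have hq : 0 ≤ 1 / p - 1 := nonneg_of_mul_nonneg_left (hy.trans hyq) hw
    have hpow := rpow_le_mul_rpow_of_le_mul hy hw hp.le hyq
    linarith [mul_nonneg hweight (setIntegral_Ioi_rpow_div_add_one_nonneg hq (p - 1))]

/-- Majorization: for `0 < p < 1`, all `z < 0`, `y ≥ 0` and `x ≥ z`,
`U(x,y,z) ≥ y^p − c_p^p·(−z)^p`. -/
theorem specialU_majorization (p : ℝ) (hp : 0 < p) (hp1 : p < 1)
    (z y x : ℝ) (hz : z < 0) (hy : 0 ≤ y) (hxz : z ≤ x) :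
    specialU p x y z
      ≥ y ^ p - ((1 / p - 1) ^ p + ∫ s in Set.Ioi (1 / p - 1), s ^ (p - 1) / (s + 1))
          * (-z) ^ p :=
  specialU_majorization_general p hp z y x hz hy hxz
end

section
/- Let 0 < p < 1 and define, for real x, y ≥ 0 and z < 0: U(x,y,z) = y^p − c_p^p·(−z)^p + p·(x−z)·(−z)^{p−1}·∫_{−y/z}^∞ r^{p−1}/(r+1) dr if y > −(1/p − 1)·z, and U(x,y,z) = ((1/p − 1)^p − c_p^p)·(−z)^p + p·(x−z)·(−z)^{p−1}·∫_{1/p−1}^∞ r^{p−1}/(r+1) dr if y ≤ −(1/p − 1)·z. Then for all z < 0, all x, y with z ≤ x ≤ y and y ≥ 0, and all d ≥ 0, one has U(x+d, max(x+d, y), z) ≤ U(x,y,z) + d·p·(−z)^{p−1}·∫_{max(−y/z, 1/p−1)}^∞ r^{p−1}/(r+1) dr. -/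
/-!
Write `Z = -z`, `I(a) = ∫_a^∞ r^(p-1)/(r+1) dr` and `m = max(y/Z, 1/p - 1)`. Both branches of
`U` are then `(mZ)^p - c_p^p Z^p + p(x + Z) Z^(p-1) I(m)`. The jump from `x` to `x + d` changes
`m` only when `x + d > mZ`, to `m' = (x + d)/Z`, and the inequality becomes
`(m'Z)^p - (mZ)^p ≤ p (m' + 1) Z^p ∫_m^{m'} r^(p-1)/(r+1) dr`. This holds because
`b^p - a^p = p ∫_a^b r^(p-1) dr` and `r + 1 ≤ m' + 1` on `[m, m']`.
-/

open MeasureTheory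

open Set

noncomputable def tailIntegral (p a : ℝ) : ℝ := ∫ r in Ioi a, r ^ (p - 1) / (r + 1)

section TailIntegral

variable {p a b : ℝ}

theorem integrableOn_Ioi_rpow_div_add_one (hp1 : p < 1) (ha : 0 < a) :
    IntegrableOn (fun r : ℝ => r ^ (p - 1) / (r + 1)) (Ioi a) := by
  refine (integrableOn_Ioi_rpow_of_lt (by linarith : p - 2 < -1) ha).mono'
    (Measurable.aestronglyMeasurable (by fun_prop)) ?_
  filter_upwards [ae_restrict_mem measurableSet_Ioi] with r (hr : a < r)
  have hr0 : 0 < r := ha.trans hr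
  rw [Real.norm_of_nonneg (by positivity), show p - 2 = (p - 1) - 1 by ring,
    Real.rpow_sub_one hr0.ne' (p - 1)]
  gcongr
  linarith

theorem tailIntegral_sub_tailIntegral (hp1 : p < 1) (ha : 0 < a) (hab : a ≤ b) :
    tailIntegral p a - tailIntegral p b = ∫ r in a..b, r ^ (p - 1) / (r + 1) :=
  intervalIntegral.integral_Ioi_sub_Ioi (integrableOn_Ioi_rpow_div_add_one hp1 ha) hab

theorem rpow_sub_rpow_le_mul_integral (hp : 0 < p) (ha : 0 < a) (hab : a ≤ b) :
    b ^ p - a ^ p ≤ p * (b + 1) * ∫ r in a..b, r ^ (p - 1) / (r + 1) := by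
  have hpos : ∀ r ∈ uIcc a b, 0 < r := fun r hr =>
    ha.trans_le (by rw [uIcc_of_le hab] at hr; exact hr.1)
  have hcont : ContinuousOn (fun r : ℝ => r ^ (p - 1)) (uIcc a b) := fun r hr =>
    (Real.continuousAt_rpow_const r _ (Or.inl (hpos r hr).ne')).continuousWithinAt
  have hweighted : IntervalIntegrable (fun r : ℝ => r ^ (p - 1) / (r + 1)) volume a b :=
    (hcont.div (by fun_prop) fun r hr => by linarith [hpos r hr]).intervalIntegrable
  have hpow : ∫ r in a..b, r ^ (p - 1) = (b ^ p - a ^ p) / p := by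
    rw [integral_rpow (Or.inl (by linarith))]
    norm_num
  have hmono : ∫ r in a..b, r ^ (p - 1) ≤ ∫ r in a..b, (b + 1) * (r ^ (p - 1) / (r + 1)) := by
    refine intervalIntegral.integral_mono_on hab hcont.intervalIntegrable
      (hweighted.const_mul _) fun r hr => ?_
    have hr0 : 0 < r := ha.trans_le hr.1
    rw [mul_div_left_comm, le_mul_iff_one_le_right (by positivity),
      one_le_div (by positivity)]
    linarith [hr.2]
  rw [hpow, intervalIntegral.integral_const_mul, div_le_iff₀ hp] at hmono
  linarith

theorem mul_rpow_sub_mul_rpow_le_tailIntegral_sub (hp : 0 < p) (hp1 : p < 1) (ha : 0 < a)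
    (hab : a ≤ b) {Z : ℝ} (hZ : 0 < Z) :
    (b * Z) ^ p - (a * Z) ^ p
      ≤ p * ((b + 1) * Z) * Z ^ (p - 1) * (tailIntegral p a - tailIntegral p b) := by
  have hZp : Z * Z ^ (p - 1) = Z ^ p := by
    rw [← Real.rpow_one_add' hZ.le (by linarith), add_sub_cancel]
  have hkey := mul_le_mul_of_nonneg_left (rpow_sub_rpow_le_mul_integral hp ha hab)
    (Real.rpow_nonneg hZ.le p)
  rw [tailIntegral_sub_tailIntegral hp1 ha hab, Real.mul_rpow (ha.trans_le hab).le hZ.le,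
    Real.mul_rpow ha.le hZ.le]
  linear_combination hkey - p * (b + 1) * (∫ r in a..b, r ^ (p - 1) / (r + 1)) * hZp

end TailIntegral

theorem specialU_eq_of_neg {p z : ℝ} (hp : 0 < p) (hp1 : p < 1) (hz : z < 0) (x y : ℝ) :
    specialU p x y z
      = (max (-y / z) (1 / p - 1) * -z) ^ p
        - ((1 / p - 1) ^ p + tailIntegral p (1 / p - 1)) * (-z) ^ p
        + p * (x - z) * (-z) ^ (p - 1) * tailIntegral p (max (-y / z) (1 / p - 1)) := by
  have ht0 : 0 ≤ 1 / p - 1 := by rw [sub_nonneg, le_div_iff₀ hp]; linarith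
  have hthreshold : y > -(1 / p - 1) * z ↔ 1 / p - 1 < -y / z := by
    rw [neg_div, ← div_neg, lt_div_iff₀ (neg_pos.2 hz)]
    ring_nf
  unfold specialU tailIntegral
  split_ifs with h
  · rw [max_eq_left (hthreshold.1 h).le, neg_div, neg_mul_neg, div_mul_cancel₀ _ hz.ne]
  · rw [max_eq_right (not_lt.1 (mt hthreshold.2 h)), Real.mul_rpow ht0 (neg_pos.2 hz).le]
    ring

theorem specialU_jump_general (p : ℝ) (hp : 0 < p) (hp1 : p < 1)
    (z x y : ℝ) (hz : z < 0)
    (d : ℝ) :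
    specialU p (x + d) (max (x + d) y) z
      ≤ specialU p x y z
        + d * (p * (-z) ^ (p - 1)
            * ∫ r in Set.Ioi (max (-y / z) (1 / p - 1)), r ^ (p - 1) / (r + 1)) := by
  have hscale : Monotone fun t : ℝ => -t / z := fun s t hst =>
    div_le_div_of_nonpos_of_le hz.le (neg_le_neg hst)
  rw [specialU_eq_of_neg hp hp1 hz, specialU_eq_of_neg hp hp1 hz, hscale.map_max, max_assoc]
  change _ ≤ _ + d * (p * (-z) ^ (p - 1) * tailIntegral p _)
  set m := max (-y / z) (1 / p - 1)
  rcases max_choice (-(x + d) / z) m with hgrow | hkeep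
  · have hm : 0 < m := (sub_pos.2 (one_lt_one_div hp hp1)).trans_le (le_max_right _ _)
    have hmb : m ≤ -(x + d) / z := hgrow ▸ le_max_right _ _
    have hkey := mul_rpow_sub_mul_rpow_le_tailIntegral_sub hp hp1 hm hmb (neg_pos.2 hz)
    rw [add_one_mul, neg_div, neg_mul_neg, div_mul_cancel₀ _ hz.ne] at hkey
    rw [hgrow, neg_div, neg_mul_neg, div_mul_cancel₀ _ hz.ne]
    linear_combination hkey
  · rw [hkeep]
    exact le_of_eq (by ring)

/-- Jump condition: for `0 < p < 1`, all `z < 0`, `z ≤ x ≤ y` with `y ≥ 0`, and all `d ≥ 0`,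
`U(x+d, max(x+d,y), z) ≤ U(x,y,z) + d·U_x(x,y,z)`, where
`U_x(x,y,z) = p(−z)^(p−1) ∫_{max(−y/z,1/p−1)}^∞ r^(p−1)/(r+1) dr`. -/
theorem specialU_jump (p : ℝ) (hp : 0 < p) (hp1 : p < 1)
    (z x y : ℝ) (hz : z < 0) (hzx : z ≤ x) (hxy : x ≤ y) (hy : 0 ≤ y)
    (d : ℝ) (hd : 0 ≤ d) :
    specialU p (x + d) (max (x + d) y) z
      ≤ specialU p x y z
        + d * (p * (-z) ^ (p - 1)
            * ∫ r in Set.Ioi (max (-y / z) (1 / p - 1)), r ^ (p - 1) / (r + 1)) :=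
  specialU_jump_general p hp hp1 z x y hz d
end

section
/- Let (Ω,F,P) be a probability space with a filtration (F_n)_{n∈ℕ} and let X = (X_n)_{n∈ℕ} be a nonnegative martingale. Then for every 0 < p < 1 and every n, E[(max_{0≤k≤n} X_k)^p] ≤ (1−p)^{−1} · sup_{m∈ℕ} E[X_m^p]. -/
/-!
Dubins' inequality `t * P(t ≤ M_n) ≤ E[min(X_0, t)]` for a nonnegative supermartingale follows by
optional stopping of the supermartingale `min(X, t)` at the first time `X` reaches `t`.
Integrating it against `p t^(p-1) dt` (layer cake) and using
`∫_0^∞ t^(p-2) min(x, t) dt = x^p / (p (1 - p))` gives `E[M_n^p] ≤ (1 - p)⁻¹ E[X_0^p]`.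
-/

open MeasureTheory Set

theorem lintegral_Ioi_rpow_sub_two_mul_min {p : ℝ} (hp : 0 < p) (hp1 : p < 1) {x : ℝ}
    (hx : 0 ≤ x) :
    ∫⁻ t in Ioi 0, ENNReal.ofReal (t ^ (p - 2) * min x t)
      = ENNReal.ofReal (x ^ p / (p * (1 - p))) := by
  rcases hx.eq_or_lt with rfl | x_pos
  · rw [Real.zero_rpow hp.ne', zero_div, ENNReal.ofReal_zero]
    refine (setLIntegral_congr_fun measurableSet_Ioi fun t ht => ?_).trans lintegral_zero
    rw [min_eq_left (le_of_lt ht), mul_zero, ENNReal.ofReal_zero]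
  have h_one_sub : 1 - p ≠ 0 := by linarith
  have below : ∫⁻ t in Ioc 0 x, ENNReal.ofReal (t ^ (p - 2) * min x t)
      = ENNReal.ofReal (x ^ p / p) := by
    rw [setLIntegral_congr_fun measurableSet_Ioc (g := fun t => ENNReal.ofReal (t ^ (p - 1)))
        fun t ht => by rw [min_eq_right ht.2, ← Real.rpow_add_one ht.1.ne']; ring_nf,
      ← ofReal_integral_eq_lintegral_ofReal, ← intervalIntegral.integral_of_le hx,
      integral_rpow (Or.inl (by linarith)), sub_add_cancel, Real.zero_rpow hp.ne', sub_zero]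
    · exact (intervalIntegrable_iff_integrableOn_Ioc_of_le hx).mp
        (intervalIntegral.intervalIntegrable_rpow' (by linarith))
    · filter_upwards [ae_restrict_mem measurableSet_Ioc] with t ht
      exact Real.rpow_nonneg ht.1.le _
  have above : ∫⁻ t in Ioi x, ENNReal.ofReal (t ^ (p - 2) * min x t)
      = ENNReal.ofReal (x ^ p / (1 - p)) := by
    rw [setLIntegral_congr_fun measurableSet_Ioi (g := fun t => ENNReal.ofReal (x * t ^ (p - 2)))
        fun t ht => by rw [min_eq_left (le_of_lt ht), mul_comm],
      ← ofReal_integral_eq_lintegral_ofReal, integral_const_mul,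
      integral_Ioi_rpow_of_lt (by linarith) x_pos]
    · congr 1
      have h_sub_one : p - 1 ≠ 0 := by linarith
      rw [show p - 2 + 1 = p - 1 by ring, Real.rpow_sub_one x_pos.ne']
      field_simp
      ring
    · exact (integrableOn_Ioi_rpow_of_lt (by linarith) x_pos).const_mul x
    · filter_upwards [ae_restrict_mem measurableSet_Ioi] with t ht
      exact mul_nonneg hx (Real.rpow_nonneg (x_pos.trans ht).le _)
  rw [← Ioc_union_Ioi_eq_Ioi hx, lintegral_union measurableSet_Ioi (Ioc_disjoint_Ioi le_rfl),
    below, above, ← ENNReal.ofReal_add (by positivity) (div_nonneg (by positivity) (by linarith))]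
  congr 1
  field_simp
  ring

theorem Real.rpow_le_one_sub_add_mul {x p : ℝ} (hx : 0 ≤ x) (hp : 0 ≤ p) (hp1 : p ≤ 1) :
    x ^ p ≤ 1 - p + p * x := by
  simpa using Real.geom_mean_le_arith_mean2_weighted (sub_nonneg.2 hp1) hp zero_le_one hx
    (sub_add_cancel 1 p)

namespace MeasureTheory

variable {Ω : Type*} {m0 : MeasurableSpace Ω} {μ : Measure Ω}

noncomputable def runningMax (X : ℕ → Ω → ℝ) (n : ℕ) (ω : Ω) : ℝ :=
  (Finset.range (n + 1)).sup' Finset.nonempty_range_add_one fun k => X k ω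

theorem le_runningMax_iff {X : ℕ → Ω → ℝ} {n : ℕ} {ω : Ω} {t : ℝ} :
    t ≤ runningMax X n ω ↔ ∃ k ≤ n, t ≤ X k ω := by
  simp [runningMax, Finset.le_sup'_iff]

theorem measurable_runningMax {X : ℕ → Ω → ℝ} (hX : ∀ k, Measurable (X k)) (n : ℕ) :
    Measurable (runningMax X n) :=
  Finset.measurable_range_sup'' fun k _ => hX k

theorem Integrable.rpow_of_nonneg [IsFiniteMeasure μ] {f : Ω → ℝ} (hf : Integrable f μ)
    (hf_nonneg : ∀ᵐ ω ∂μ, 0 ≤ f ω) {p : ℝ} (hp : 0 ≤ p) (hp1 : p ≤ 1) :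
    Integrable (fun ω => f ω ^ p) μ := by
  refine Integrable.mono' ((integrable_const (1 - p)).add (hf.const_mul p))
    (hf.aemeasurable.pow_const p).aestronglyMeasurable ?_
  filter_upwards [hf_nonneg] with ω hω
  rw [Real.norm_of_nonneg (Real.rpow_nonneg hω p)]
  exact Real.rpow_le_one_sub_add_mul hω hp hp1

theorem Supermartingale.min_const {ι : Type*} [Preorder ι] {ℱ : Filtration ι m0}
    [IsFiniteMeasure μ] {X : ι → Ω → ℝ} (hX : Supermartingale X ℱ μ) (c : ℝ) :
    Supermartingale (fun i ω => min (X i ω) c) ℱ μ := by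
  have hint : ∀ i, Integrable (fun ω => min (X i ω) c) μ :=
    fun i => (hX.integrable i).inf (integrable_const c)
  refine ⟨fun i => (continuous_id.min continuous_const).comp_stronglyMeasurable
    (hX.stronglyAdapted i), fun i j hij => ?_, hint⟩
  have le_X : μ[fun ω => min (X j ω) c | ℱ i] ≤ᵐ[μ] μ[X j | ℱ i] :=
    condExp_mono (hint j) (hX.integrable j) (ae_of_all _ fun ω => min_le_left _ _)
  have le_c : μ[fun ω => min (X j ω) c | ℱ i] ≤ᵐ[μ] fun _ => c := by
    simpa only [condExp_const (ℱ.le i)] using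
      condExp_mono (m := ℱ i) (hint j) (integrable_const c) (ae_of_all _ fun ω => min_le_right _ _)
  filter_upwards [le_X, le_c, hX.condExp_ae_le hij] with ω hω_X hω_c hω
  exact le_min (hω_X.trans hω) hω_c

section

variable {ℱ : Filtration ℕ m0} {X : ℕ → Ω → ℝ}

theorem Supermartingale.mul_measureReal_le_runningMax_le_integral_min [IsFiniteMeasure μ]
    (hX : Supermartingale X ℱ μ) (hX_nonneg : ∀ k, ∀ᵐ ω ∂μ, 0 ≤ X k ω) (n : ℕ) {t : ℝ}
    (ht : 0 ≤ t) :
    t * μ.real {ω | t ≤ runningMax X n ω} ≤ ∫ ω, min (X 0 ω) t ∂μ := by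
  set Z : ℕ → Ω → ℝ := fun k ω => min (X k ω) t
  have hZ : Supermartingale Z ℱ μ := hX.min_const t
  set T : Ω → ℕ∞ := fun ω => (hittingBtwn X (Ici t) 0 n ω : ℕ)
  have hT : IsStoppingTime ℱ T :=
    hX.stronglyAdapted.adapted.isStoppingTime_hittingBtwn measurableSet_Ici
  have hT_le : ∀ ω, T ω ≤ n := fun ω => ENat.natCast_le_natCast.2 (hittingBtwn_le ω)
  set A := {ω | t ≤ runningMax X n ω}
  have hA : MeasurableSet A := measurableSet_le measurable_const
    (measurable_runningMax (fun k => ((hX.stronglyMeasurable k).mono (ℱ.le k)).measurable) n)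
  have stopped_eq : ∀ ω ∈ A, stoppedValue Z T ω = t := by
    intro ω hω
    obtain ⟨k, hk, hkt⟩ := le_runningMax_iff.1 hω
    exact min_eq_right (stoppedValue_hittingBtwn_mem ⟨k, ⟨k.zero_le, hk⟩, hkt⟩)
  have optional_stopping : ∫ ω, stoppedValue Z T ω ∂μ ≤ ∫ ω, Z 0 ω ∂μ := by
    have := hZ.neg.expected_stoppedValue_mono (isStoppingTime_const ℱ 0) hT
      (fun _ => zero_le) hT_le
    simpa [stoppedValue, integral_neg] using this
  calc t * μ.real A = ∫ ω in A, stoppedValue Z T ω ∂μ := by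
        rw [setIntegral_congr_fun hA stopped_eq, setIntegral_const, smul_eq_mul, mul_comm]
    _ ≤ ∫ ω, stoppedValue Z T ω ∂μ := by
        refine setIntegral_le_integral (integrable_stoppedValue ℕ hT hZ.integrable hT_le) ?_
        filter_upwards [ae_all_iff.2 hX_nonneg] with ω hω using le_min (hω _) ht
    _ ≤ ∫ ω, Z 0 ω ∂μ := optional_stopping

theorem Supermartingale.measure_le_runningMax_mul_rpow_le_lintegral [IsFiniteMeasure μ]
    (hX : Supermartingale X ℱ μ) (hX_nonneg : ∀ k, ∀ᵐ ω ∂μ, 0 ≤ X k ω) (n : ℕ) {t : ℝ}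
    (ht : 0 < t) (p : ℝ) :
    μ {ω | t ≤ runningMax X n ω} * ENNReal.ofReal (t ^ (p - 1))
      ≤ ∫⁻ ω, ENNReal.ofReal (t ^ (p - 2) * min (X 0 ω) t) ∂μ := by
  have hmin_nonneg : ∀ᵐ ω ∂μ, 0 ≤ min (X 0 ω) t := by
    filter_upwards [hX_nonneg 0] with ω hω using le_min hω ht.le
  have htp : 0 ≤ t ^ (p - 2) := Real.rpow_nonneg ht.le _
  calc μ {ω | t ≤ runningMax X n ω} * ENNReal.ofReal (t ^ (p - 1))
      = ENNReal.ofReal (t ^ (p - 2) * (t * μ.real {ω | t ≤ runningMax X n ω})) := by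
        rw [← ofReal_measureReal, ← ENNReal.ofReal_mul measureReal_nonneg, show p - 1 = p - 2 + 1
          by ring, Real.rpow_add_one ht.ne']
        ring_nf
    _ ≤ ENNReal.ofReal (t ^ (p - 2) * ∫ ω, min (X 0 ω) t ∂μ) := by
        gcongr
        exact hX.mul_measureReal_le_runningMax_le_integral_min hX_nonneg n ht.le
    _ = ∫⁻ ω, ENNReal.ofReal (t ^ (p - 2) * min (X 0 ω) t) ∂μ := by
        simp_rw [ENNReal.ofReal_mul htp]
        rw [lintegral_const_mul' _ _ ENNReal.ofReal_ne_top, ofReal_integral_eq_lintegral_ofReal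
          (show Integrable (fun ω => min (X 0 ω) t) μ from (hX.integrable 0).inf
            (integrable_const t)) hmin_nonneg]

theorem Supermartingale.lintegral_runningMax_rpow_le [IsFiniteMeasure μ]
    (hX : Supermartingale X ℱ μ) (hX_nonneg : ∀ k, ∀ᵐ ω ∂μ, 0 ≤ X k ω) {p : ℝ} (hp : 0 < p)
    (hp1 : p < 1) (n : ℕ) :
    ∫⁻ ω, ENNReal.ofReal (runningMax X n ω ^ p) ∂μ
      ≤ ENNReal.ofReal (1 - p)⁻¹ * ∫⁻ ω, ENNReal.ofReal (X 0 ω ^ p) ∂μ := by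
  have hX_meas : ∀ k, Measurable (X k) :=
    fun k => ((hX.stronglyMeasurable k).mono (ℱ.le k)).measurable
  have hM_nonneg : ∀ᵐ ω ∂μ, 0 ≤ runningMax X n ω := by
    filter_upwards [hX_nonneg 0] with ω hω using le_runningMax_iff.2 ⟨0, n.zero_le, hω⟩
  have h_meas : Measurable (Function.uncurry fun (t : ℝ) (ω : Ω) =>
      ENNReal.ofReal (t ^ (p - 2) * min (X 0 ω) t)) := by
    have := hX_meas 0
    fun_prop
  calc ∫⁻ ω, ENNReal.ofReal (runningMax X n ω ^ p) ∂μ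
      = ENNReal.ofReal p *
          ∫⁻ t in Ioi 0, μ {ω | t ≤ runningMax X n ω} * ENNReal.ofReal (t ^ (p - 1)) :=
        lintegral_rpow_eq_lintegral_meas_le_mul μ hM_nonneg
          (measurable_runningMax hX_meas n).aemeasurable hp
    _ ≤ ENNReal.ofReal p *
          ∫⁻ t in Ioi 0, ∫⁻ ω, ENNReal.ofReal (t ^ (p - 2) * min (X 0 ω) t) ∂μ := by
        gcongr ENNReal.ofReal p * ?_
        exact setLIntegral_mono' measurableSet_Ioi fun t ht =>
          hX.measure_le_runningMax_mul_rpow_le_lintegral hX_nonneg n ht p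
    _ = ENNReal.ofReal p *
          ∫⁻ ω, (∫⁻ t in Ioi 0, ENNReal.ofReal (t ^ (p - 2) * min (X 0 ω) t)) ∂μ := by
        rw [lintegral_lintegral_swap h_meas.aemeasurable]
    _ = ENNReal.ofReal p *
          ∫⁻ ω, ENNReal.ofReal (p * (1 - p))⁻¹ * ENNReal.ofReal (X 0 ω ^ p) ∂μ := by
        congr 1
        refine lintegral_congr_ae ?_
        filter_upwards [hX_nonneg 0] with ω hω
        rw [lintegral_Ioi_rpow_sub_two_mul_min hp hp1 hω, div_eq_inv_mul, ENNReal.ofReal_mul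
          (inv_nonneg.2 (by nlinarith))]
    _ = ENNReal.ofReal (1 - p)⁻¹ * ∫⁻ ω, ENNReal.ofReal (X 0 ω ^ p) ∂μ := by
        rw [lintegral_const_mul' _ _ ENNReal.ofReal_ne_top, ← mul_assoc,
          ← ENNReal.ofReal_mul hp.le, mul_inv, ← mul_assoc, mul_inv_cancel₀ hp.ne', one_mul]

theorem Supermartingale.integral_runningMax_rpow_le [IsFiniteMeasure μ]
    (hX : Supermartingale X ℱ μ) (hX_nonneg : ∀ k, ∀ᵐ ω ∂μ, 0 ≤ X k ω) {p : ℝ} (hp : 0 < p)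
    (hp1 : p < 1) (n : ℕ) :
    ∫ ω, runningMax X n ω ^ p ∂μ ≤ (1 - p)⁻¹ * ∫ ω, X 0 ω ^ p ∂μ := by
  have hX_meas : ∀ k, Measurable (X k) :=
    fun k => ((hX.stronglyMeasurable k).mono (ℱ.le k)).measurable
  have hX0p_nonneg : ∀ᵐ ω ∂μ, 0 ≤ X 0 ω ^ p := by
    filter_upwards [hX_nonneg 0] with ω hω using Real.rpow_nonneg hω p
  have hM_nonneg : ∀ᵐ ω ∂μ, 0 ≤ runningMax X n ω ^ p := by
    filter_upwards [hX_nonneg 0] with ω hω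
    exact Real.rpow_nonneg (le_runningMax_iff.2 ⟨0, n.zero_le, hω⟩) p
  have h := hX.lintegral_runningMax_rpow_le hX_nonneg hp hp1 n
  rw [← ofReal_integral_eq_lintegral_ofReal
    ((hX.integrable 0).rpow_of_nonneg (hX_nonneg 0) hp.le hp1.le) hX0p_nonneg,
    ← ENNReal.ofReal_mul (inv_nonneg.2 (by linarith))] at h
  rw [integral_eq_lintegral_of_nonneg_ae hM_nonneg
    ((measurable_runningMax hX_meas n).pow_const p).aestronglyMeasurable]
  exact ENNReal.toReal_le_of_le_ofReal
    (mul_nonneg (inv_nonneg.2 (by linarith)) (integral_nonneg_of_ae hX0p_nonneg)) h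

theorem Supermartingale.bddAbove_integral_rpow [IsFiniteMeasure μ]
    (hX : Supermartingale X ℱ μ) (hX_nonneg : ∀ k, ∀ᵐ ω ∂μ, 0 ≤ X k ω) {p : ℝ} (hp : 0 ≤ p)
    (hp1 : p ≤ 1) :
    BddAbove (range fun m => ∫ ω, X m ω ^ p ∂μ) := by
  refine ⟨(1 - p) * μ.real univ + p * ∫ ω, X 0 ω ∂μ, forall_mem_range.2 fun m => ?_⟩
  have hXm_le_X0 : ∫ ω, X m ω ∂μ ≤ ∫ ω, X 0 ω ∂μ := by
    simpa only [setIntegral_univ] using hX.setIntegral_le m.zero_le MeasurableSet.univ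
  calc ∫ ω, X m ω ^ p ∂μ ≤ ∫ ω, 1 - p + p * X m ω ∂μ := by
        refine integral_mono_ae ((hX.integrable m).rpow_of_nonneg (hX_nonneg m) hp hp1)
          ((integrable_const _).add ((hX.integrable m).const_mul p)) ?_
        filter_upwards [hX_nonneg m] with ω hω using Real.rpow_le_one_sub_add_mul hω hp hp1
    _ = (1 - p) * μ.real univ + p * ∫ ω, X m ω ∂μ := by
        rw [integral_add (integrable_const _) ((hX.integrable m).const_mul p), integral_const,
          integral_const_mul, smul_eq_mul, mul_comm]
    _ ≤ (1 - p) * μ.real univ + p * ∫ ω, X 0 ω ∂μ := by gcongr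

end

end MeasureTheory

/-- Shao's inequality: if `X` is a nonnegative discrete-time martingale and `0 < p < 1`,
then `E[(max_{0≤k≤n} X_k)^p] ≤ (1−p)⁻¹ · sup_m E[X_m^p]`. -/
theorem shao_maximal_inequality
    {Ω : Type*} {m0 : MeasurableSpace Ω} {P : Measure Ω} [IsProbabilityMeasure P]
    (ℱ : Filtration ℕ m0) (X : ℕ → Ω → ℝ)
    (hX : Martingale X ℱ P) (hpos : ∀ n, ∀ᵐ ω ∂P, 0 ≤ X n ω)
    (p : ℝ) (hp : 0 < p) (hp1 : p < 1) (n : ℕ) :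
    ∫ ω, ((Finset.range (n + 1)).sup' (by simp) fun k => X k ω) ^ p ∂P
      ≤ (1 - p)⁻¹ * ⨆ m : ℕ, ∫ ω, (X m ω) ^ p ∂P := by
  calc ∫ ω, runningMax X n ω ^ p ∂P ≤ (1 - p)⁻¹ * ∫ ω, X 0 ω ^ p ∂P :=
        hX.supermartingale.integral_runningMax_rpow_le hpos hp hp1 n
    _ ≤ (1 - p)⁻¹ * ⨆ m : ℕ, ∫ ω, X m ω ^ p ∂P := by
        have : 0 ≤ 1 - p := by linarith
        gcongr
        -- in `ℝ`, `⨆` of a family that is not bounded above is `0`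
        exact le_ciSup (hX.supermartingale.bddAbove_integral_rpow hpos hp.le hp1.le) 0
end
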